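/- arXiv:2005.07587 — 2 statements merged into one kernel-verified Lean document; each statement's English description precedes it below -/
import Mathlib

section
/- For unit vectors v and v' in R^p and a constant k > -1, the trace of (I + k v' v'^T)^{-1} (I + k v v^T) equals p + (k^2/(k+1)) * (1 - <v, v'>^2). -/
/-! Substitute the Sherman–Morrison inverse `I - (k/(k+1)) v'v'ᵀ` and expand: the trace of a
rank-one matrix `a bᵀ` is `⟨a, b⟩`, and `v'v'ᵀ vvᵀ = ⟨v', v⟩ v'vᵀ` has trace `⟨v, v'⟩²`. -/

open Matrix
/-- Euclidean norm of a vector in `Fin p → ℝ`. -/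
noncomputable def enorm' {p : ℕ} (v : Fin p → ℝ) : ℝ := Real.sqrt (v ⬝ᵥ v)

theorem dotProduct_self_eq_one_of_enorm'_eq_one {p : ℕ} {v : Fin p → ℝ} (hv : enorm' v = 1) :
    v ⬝ᵥ v = 1 := by
  rwa [enorm', Real.sqrt_eq_one] at hv

section ShermanMorrison

variable {n K : Type*} [Fintype n] [DecidableEq n] [Field K]

theorem Matrix.inv_one_add_vecMulVec {a b : n → K} (h : 1 + b ⬝ᵥ a ≠ 0) :
    (1 + vecMulVec a b)⁻¹ = 1 - (1 + b ⬝ᵥ a)⁻¹ • vecMulVec a b := by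
  refine inv_eq_left_inv ?_
  rw [sub_mul, one_mul, mul_add, mul_one, smul_mul, vecMulVec_mul_vecMulVec, vecMulVec_smul]
  have hfactor : vecMulVec a b + (b ⬝ᵥ a) • vecMulVec a b = (1 + b ⬝ᵥ a) • vecMulVec a b := by
    rw [add_smul, one_smul]
  rw [← smul_add, hfactor, smul_smul, inv_mul_cancel₀ h, one_smul, add_sub_cancel_right]

theorem Matrix.inv_one_add_smul_vecMulVec_self {u : n → K} (hu : u ⬝ᵥ u = 1) {k : K}
    (hk : k + 1 ≠ 0) :
    (1 + k • vecMulVec u u)⁻¹ = 1 - (k / (k + 1)) • vecMulVec u u := by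
  have h : 1 + u ⬝ᵥ (k • u) ≠ 0 := by rwa [dotProduct_smul, hu, smul_eq_mul, mul_one, add_comm]
  rw [← smul_vecMulVec, inv_one_add_vecMulVec h, smul_vecMulVec, smul_smul, dotProduct_smul, hu,
    smul_eq_mul, mul_one, add_comm, inv_mul_eq_div]

end ShermanMorrison

/-- Trace of `(I + k v' v'ᵀ)⁻¹ (I + k v vᵀ)` for unit vectors `v, v'` and `k > -1`. -/
theorem trace_inv_spike_mul_spike {p : ℕ} (v v' : Fin p → ℝ)
    (hv : enorm' v = 1) (hv' : enorm' v' = 1) (k : ℝ) (hk : -1 < k) :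
    Matrix.trace ((1 + k • Matrix.vecMulVec v' v')⁻¹ * (1 + k • Matrix.vecMulVec v v)) =
      (p : ℝ) + k ^ 2 / (k + 1) * (1 - (v ⬝ᵥ v') ^ 2) := by
  have hvv := dotProduct_self_eq_one_of_enorm'_eq_one hv
  have hv'v' := dotProduct_self_eq_one_of_enorm'_eq_one hv'
  have hk1 : k + 1 ≠ 0 := by linarith
  rw [inv_one_add_smul_vecMulVec_self hv'v' hk1, sub_mul, one_mul, mul_add, mul_one, smul_mul,
    Matrix.mul_smul, vecMulVec_mul_vecMulVec]
  simp only [trace_sub, trace_add, trace_smul, trace_one, Fintype.card_fin, trace_vecMulVec,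
    dotProduct_smul, smul_eq_mul, hvv, hv'v', dotProduct_comm v' v]
  field_simp
  ring
end

section
/- Let K ⊂ R^p be a convex cone, E a p×p real matrix, and x̄ ∈ K with ‖x̄‖ = 1. For any v ∈ K with ‖v‖ = 1, |v^T E v - x̄^T E x̄| ≤ 4 ‖v + x̄‖ ‖E‖_K, where ‖E‖_K = sup_{x,y ∈ K, ‖x‖=‖y‖=1} |x^T E y|. -/
open Matrix

/-- Euclidean norm of a vector in `Fin p → ℝ`. -/
noncomputable def eucNorm {p : ℕ} (v : Fin p → ℝ) : ℝ := Real.sqrt (v ⬝ᵥ v)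

/-- The cone-restricted operator seminorm
`‖E‖_C = sup_{x,y ∈ C, ‖x‖=‖y‖=1} |xᵀ E y|`. -/
noncomputable def coneNorm {p : ℕ} (C : Set (Fin p → ℝ)) (E : Matrix (Fin p) (Fin p) ℝ) : ℝ :=
  sSup {r : ℝ | ∃ x ∈ C, ∃ y ∈ C, eucNorm x = 1 ∧ eucNorm y = 1 ∧ r = |x ⬝ᵥ E.mulVec y|}

/-!
Put `w = v + x̄`, which lies in `K`. Then `vᵀEv - x̄ᵀEx̄ = vᵀEw - wᵀEx̄`, and since `K` is closed
under positive scaling, `|aᵀEb| ≤ ‖a‖ ‖b‖ ‖E‖_K` for all `a, b ∈ K`. The two terms are thus each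
bounded by `‖w‖ ‖E‖_K`, which gives the claim even with `2` in place of `4`.
-/

open WithLp

lemma dotProduct_mulVec_self_sub {R : Type*} [CommRing R] {n : Type*} [Fintype n]
    (A : Matrix n n R) (v x : n → R) :
    v ⬝ᵥ A *ᵥ v - x ⬝ᵥ A *ᵥ x = v ⬝ᵥ A *ᵥ (v + x) - (v + x) ⬝ᵥ A *ᵥ x := by
  simp only [mulVec_add, dotProduct_add, add_dotProduct]
  ring

section

variable {p : ℕ}

lemma eucNorm_eq_norm_toLp (v : Fin p → ℝ) : eucNorm v = ‖toLp 2 v‖ := by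
  rw [EuclideanSpace.norm_eq, eucNorm, dotProduct]
  simp [sq]

lemma eucNorm_nonneg (v : Fin p → ℝ) : 0 ≤ eucNorm v := Real.sqrt_nonneg _

lemma eucNorm_smul (c : ℝ) (v : Fin p → ℝ) : eucNorm (c • v) = |c| * eucNorm v := by
  simp only [eucNorm_eq_norm_toLp, toLp_smul, norm_smul, Real.norm_eq_abs]

lemma eucNorm_eq_zero {v : Fin p → ℝ} : eucNorm v = 0 ↔ v = 0 := by
  simp [eucNorm_eq_norm_toLp]

lemma abs_dotProduct_mulVec_le (E : Matrix (Fin p) (Fin p) ℝ) (x y : Fin p → ℝ) :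
    |x ⬝ᵥ E *ᵥ y| ≤ eucNorm x * ‖toEuclideanCLM (𝕜 := ℝ) E‖ * eucNorm y := by
  rw [← inner_toEuclideanCLM, eucNorm_eq_norm_toLp, eucNorm_eq_norm_toLp, mul_assoc]
  exact (abs_real_inner_le_norm _ _).trans
    (mul_le_mul_of_nonneg_left (ContinuousLinearMap.le_opNorm _ _) (norm_nonneg _))

lemma eucNorm_inv_smul_self {v : Fin p → ℝ} (hv : v ≠ 0) :
    eucNorm ((eucNorm v)⁻¹ • v) = 1 := by
  have : eucNorm v ≠ 0 := eucNorm_eq_zero.not.mpr hv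
  rw [eucNorm_smul, abs_inv, abs_of_nonneg (eucNorm_nonneg v), inv_mul_cancel₀ this]

lemma abs_dotProduct_mulVec_le_coneNorm_of_unit {C : Set (Fin p → ℝ)}
    (E : Matrix (Fin p) (Fin p) ℝ) {x y : Fin p → ℝ} (hxC : x ∈ C) (hyC : y ∈ C)
    (hx : eucNorm x = 1) (hy : eucNorm y = 1) :
    |x ⬝ᵥ E *ᵥ y| ≤ coneNorm C E := by
  refine le_csSup ⟨‖toEuclideanCLM (𝕜 := ℝ) E‖, ?_⟩ ⟨x, hxC, y, hyC, hx, hy, rfl⟩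
  rintro r ⟨x, -, y, -, hx, hy, rfl⟩
  simpa [hx, hy] using abs_dotProduct_mulVec_le E x y

lemma coneNorm_nonneg (C : Set (Fin p → ℝ)) (E : Matrix (Fin p) (Fin p) ℝ) :
    0 ≤ coneNorm C E :=
  Real.sSup_nonneg <| by
    rintro r ⟨x, -, y, -, -, -, rfl⟩
    exact abs_nonneg _

lemma abs_dotProduct_mulVec_le_coneNorm (K : ConvexCone ℝ (Fin p → ℝ))
    (E : Matrix (Fin p) (Fin p) ℝ) {a b : Fin p → ℝ} (haK : a ∈ K) (hbK : b ∈ K) :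
    |a ⬝ᵥ E *ᵥ b| ≤ eucNorm a * eucNorm b * coneNorm K E := by
  rcases eq_or_ne a 0 with rfl | ha
  · simp [eucNorm]
  rcases eq_or_ne b 0 with rfl | hb
  · simp [eucNorm]
  have hna : 0 < eucNorm a := (eucNorm_nonneg a).lt_of_ne' (eucNorm_eq_zero.not.mpr ha)
  have hnb : 0 < eucNorm b := (eucNorm_nonneg b).lt_of_ne' (eucNorm_eq_zero.not.mpr hb)
  have hunit := abs_dotProduct_mulVec_le_coneNorm_of_unit E
    (K.smul_mem (inv_pos.mpr hna) haK) (K.smul_mem (inv_pos.mpr hnb) hbK)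
    (eucNorm_inv_smul_self ha) (eucNorm_inv_smul_self hb)
  rwa [mulVec_smul, dotProduct_smul, smul_dotProduct, smul_eq_mul, smul_eq_mul, abs_mul, abs_mul,
    abs_inv, abs_inv, abs_of_pos hna, abs_of_pos hnb, inv_mul_le_iff₀ hnb,
    inv_mul_le_iff₀ hna, ← mul_assoc] at hunit

end

/-- For unit vectors `v, x̄` in a convex cone `K`,
`|vᵀ E v - x̄ᵀ E x̄| ≤ 4 ‖v + x̄‖ ‖E‖_K`. -/
theorem abs_quadForm_sub_le_add {p : ℕ} (K : ConvexCone ℝ (Fin p → ℝ))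
    (E : Matrix (Fin p) (Fin p) ℝ) (xbar v : Fin p → ℝ)
    (hxK : xbar ∈ K) (hx : eucNorm xbar = 1) (hvK : v ∈ K) (hv : eucNorm v = 1) :
    |v ⬝ᵥ E.mulVec v - xbar ⬝ᵥ E.mulVec xbar| ≤
      4 * eucNorm (v + xbar) * coneNorm (K : Set (Fin p → ℝ)) E := by
  have hwK : v + xbar ∈ K := K.add_mem hvK hxK
  have h₁ := abs_dotProduct_mulVec_le_coneNorm K E hvK hwK
  have h₂ := abs_dotProduct_mulVec_le_coneNorm K E hwK hxK
  rw [hv] at h₁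
  rw [hx] at h₂
  have hsN := mul_nonneg (eucNorm_nonneg (v + xbar)) (coneNorm_nonneg K E)
  calc |v ⬝ᵥ E *ᵥ v - xbar ⬝ᵥ E *ᵥ xbar|
      = |v ⬝ᵥ E *ᵥ (v + xbar) - (v + xbar) ⬝ᵥ E *ᵥ xbar| := by
        rw [dotProduct_mulVec_self_sub]
    _ ≤ |v ⬝ᵥ E *ᵥ (v + xbar)| + |(v + xbar) ⬝ᵥ E *ᵥ xbar| := abs_sub _ _
    _ ≤ 4 * eucNorm (v + xbar) * coneNorm K E := by linarith
end
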